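/- Let n ≥ 2 be an integer, s > 0 a real number, α ∈ (0, 1), and let t > 0 satisfy F_{n-1}(t) - F_{n-1}(-t) = 1 - α. Set k₂ = 1/f_{n-1}(t). Then the function of (q, r) defined on {(q, r) ∈ ℝ² : q ≤ r} by (r - q)/s - (k₂/√n)(F_{n-1}(√n r/s) - F_{n-1}(√n q/s)) attains its minimum at (q, r) = (-t s/√n, t s/√n): for all reals q ≤ r, (r - q)/s - (k₂/√n)(F_{n-1}(√n r/s) - F_{n-1}(√n q/s)) ≥ 2t/√n - (k₂/√n)(F_{n-1}(t) - F_{n-1}(-t)). -/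

import Mathlib

open MeasureTheory

/-- Student t pdf with `m` degrees of freedom. -/
noncomputable def tPdf (m : ℕ) (x : ℝ) : ℝ :=
  (Real.Gamma (((m : ℝ) + 1) / 2) / (Real.sqrt ((m : ℝ) * Real.pi) * Real.Gamma ((m : ℝ) / 2))) *
    (1 + x ^ 2 / (m : ℝ)) ^ (-(((m : ℝ) + 1) / 2))

/-- Student t cdf with `m` degrees of freedom. -/
noncomputable def tCdf (m : ℕ) (x : ℝ) : ℝ :=
  ∫ u in Set.Iic x, tPdf m u

/-! With `k = 1 / f t` for the density `f` of `t_{n-1}`, and `a = √n q / s`, `b = √n r / s`, the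
objective is `(1 / √n) ∫_a^b (1 - k f)`. The density is even and decreasing in `|x|`, so the
integrand `1 - k f` is nonpositive on `[-t, t]` and nonnegative off it; hence among all intervals,
`[-t, t]` minimizes its integral. -/

theorem setIntegral_le_setIntegral_of_nonpos_sdiff_of_nonneg_sdiff {α : Type*}
    [MeasurableSpace α] {μ : Measure α} {f : α → ℝ} {s t : Set α}
    (hs : MeasurableSet s) (ht : MeasurableSet t)
    (hfs : IntegrableOn f s μ) (hft : IntegrableOn f t μ)
    (h_nonpos : ∀ x ∈ s \ t, f x ≤ 0) (h_nonneg : ∀ x ∈ t \ s, 0 ≤ f x) :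
    ∫ x in s, f x ∂μ ≤ ∫ x in t, f x ∂μ := by
  rw [← integral_inter_add_sdiff ht hfs, ← integral_inter_add_sdiff hs hft, Set.inter_comm]
  exact add_le_add le_rfl <|
    (setIntegral_nonpos (hs.diff ht) h_nonpos).trans (setIntegral_nonneg (ht.diff hs) h_nonneg)

theorem two_mul_sub_integral_div_le {f : ℝ → ℝ} (hf : LocallyIntegrable f)
    (hf_mono : ∀ x y, x ^ 2 ≤ y ^ 2 → f y ≤ f x) {t : ℝ} (ht : 0 ≤ t) (hft : 0 < f t)
    {a b : ℝ} (hab : a ≤ b) :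
    2 * t - (∫ x in -t..t, f x) / f t ≤ (b - a) - (∫ x in a..b, f x) / f t := by
  set g : ℝ → ℝ := fun x ↦ 1 - f x / f t
  have hf_int : ∀ u v, IntervalIntegrable f volume u v :=
    fun u v ↦ (hf.integrableOn_isCompact isCompact_uIcc).intervalIntegrable
  have hg_int : ∀ {u v : ℝ}, u ≤ v → IntegrableOn g (Set.Ioc u v) := fun huv ↦
    (intervalIntegrable_iff_integrableOn_Ioc_of_le huv).1
      (intervalIntegrable_const.sub ((hf_int _ _).div_const _))
  have integral_g : ∀ {u v : ℝ}, u ≤ v →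
      ∫ x in Set.Ioc u v, g x = (v - u) - (∫ x in u..v, f x) / f t := fun {u v} huv ↦ by
    rw [← intervalIntegral.integral_of_le huv, intervalIntegral.integral_sub
      intervalIntegrable_const ((hf_int _ _).div_const _),
      intervalIntegral.integral_const, intervalIntegral.integral_div, smul_eq_mul, mul_one]
  have hg_nonpos : ∀ x ∈ Set.Ioc (-t) t \ Set.Ioc a b, g x ≤ 0 := fun x ⟨⟨hx₁, hx₂⟩, _⟩ ↦ by
    simp only [g, sub_nonpos, one_le_div hft]
    exact hf_mono x t (by nlinarith)
  have hg_nonneg : ∀ x ∈ Set.Ioc a b \ Set.Ioc (-t) t, 0 ≤ g x := fun x ⟨_, hx⟩ ↦ by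
    have hsq : t ^ 2 ≤ x ^ 2 := by
      rw [Set.mem_Ioc, not_and_or, not_lt, not_le] at hx
      rcases hx with hx | hx <;> nlinarith
    simp only [g, sub_nonneg, div_le_one hft]
    exact hf_mono t x hsq
  have := setIntegral_le_setIntegral_of_nonpos_sdiff_of_nonneg_sdiff measurableSet_Ioc
    measurableSet_Ioc (hg_int (by linarith)) (hg_int hab) hg_nonpos hg_nonneg
  rw [integral_g (by linarith), integral_g hab] at this
  linarith

section StudentT

variable {m : ℕ}

theorem tPdf_pos (hm : 1 ≤ m) (x : ℝ) : 0 < tPdf m x := by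
  have := Real.Gamma_pos_of_pos (s := ((m : ℝ) + 1) / 2) (by positivity)
  have := Real.Gamma_pos_of_pos (s := (m : ℝ) / 2) (by positivity)
  have : 0 < Real.sqrt ((m : ℝ) * Real.pi) := Real.sqrt_pos.2 (by positivity)
  unfold tPdf
  positivity

theorem tPdf_le_tPdf_of_sq_le {x y : ℝ} (h : x ^ 2 ≤ y ^ 2) : tPdf m y ≤ tPdf m x := by
  unfold tPdf
  refine mul_le_mul_of_nonneg_left ?_ ?_
  · exact Real.rpow_le_rpow_of_nonpos (by positivity) (by gcongr) (neg_nonpos.2 (by positivity))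
  · have := Real.Gamma_nonneg_of_nonneg (s := ((m : ℝ) + 1) / 2) (by positivity)
    have := Real.Gamma_nonneg_of_nonneg (s := (m : ℝ) / 2) (by positivity)
    positivity

/-- Substituting `x = √m y` reduces integrability to that of `(1 + y ^ 2) ^ (-(m + 1) / 2)`. -/
theorem integrable_tPdf (hm : 1 ≤ m) : Integrable (tPdf m) := by
  have hm' : (1 : ℝ) ≤ m := by exact_mod_cast hm
  have hsqrt : Real.sqrt m ≠ 0 := by positivity
  have hbase := (integrable_rpow_neg_one_add_norm_sq (E := ℝ) (μ := volume)
    (r := (m : ℝ) + 1) (by simp; linarith)).comp_div hsqrt |>.const_mul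
      (Real.Gamma (((m : ℝ) + 1) / 2) / (Real.sqrt ((m : ℝ) * Real.pi) * Real.Gamma ((m : ℝ) / 2)))
  convert hbase using 2 with x
  rw [tPdf, Real.norm_eq_abs, sq_abs, div_pow, Real.sq_sqrt (by positivity), neg_div]

theorem tCdf_sub_tCdf (hm : 1 ≤ m) (a b : ℝ) :
    tCdf m b - tCdf m a = ∫ x in a..b, tPdf m x :=
  intervalIntegral.integral_Iic_sub_Iic (integrable_tPdf hm).integrableOn
    (integrable_tPdf hm).integrableOn

end StudentT

theorem stmt10_general (n : ℕ) (hn : 2 ≤ n) (s : ℝ) (hs : 0 < s)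
    (t : ℝ) (ht : 0 < t)
    (q r : ℝ) (hqr : q ≤ r) :
    (r - q) / s -
        ((1 / tPdf (n - 1) t) / Real.sqrt n) *
          (tCdf (n - 1) (Real.sqrt n * r / s) - tCdf (n - 1) (Real.sqrt n * q / s)) ≥
      2 * t / Real.sqrt n -
        ((1 / tPdf (n - 1) t) / Real.sqrt n) * (tCdf (n - 1) t - tCdf (n - 1) (-t)) := by
  have hm : 1 ≤ n - 1 := by omega
  have hsqrt : 0 < Real.sqrt n := Real.sqrt_pos.2 (by exact_mod_cast (by omega : 0 < n))
  have hmin := two_mul_sub_integral_div_le (integrable_tPdf hm).locallyIntegrable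
    (fun _ _ ↦ tPdf_le_tPdf_of_sq_le) ht.le (tPdf_pos hm t)
    (a := Real.sqrt n * q / s) (b := Real.sqrt n * r / s) (by gcongr)
  rw [← tCdf_sub_tCdf hm, ← tCdf_sub_tCdf hm] at hmin
  calc 2 * t / Real.sqrt n - 1 / tPdf (n - 1) t / Real.sqrt n * (tCdf (n - 1) t - tCdf (n - 1) (-t))
      = (2 * t - (tCdf (n - 1) t - tCdf (n - 1) (-t)) / tPdf (n - 1) t) / Real.sqrt n := by
        field_simp
    _ ≤ (Real.sqrt n * r / s - Real.sqrt n * q / s -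
          (tCdf (n - 1) (Real.sqrt n * r / s) - tCdf (n - 1) (Real.sqrt n * q / s)) /
            tPdf (n - 1) t) / Real.sqrt n := by gcongr
    _ = _ := by field_simp

/-- Let `n ≥ 2`, `s > 0`, `α ∈ (0,1)`, and `t > 0` with
`F_{n-1}(t) - F_{n-1}(-t) = 1 - α`; set `k₂ = 1/f_{n-1}(t)`. Then on `{q ≤ r}` the function
`(r - q)/s - (k₂/√n)(F_{n-1}(√n r/s) - F_{n-1}(√n q/s))` attains its minimum at
`(q, r) = (-t s/√n, t s/√n)`. -/
theorem stmt10 (n : ℕ) (hn : 2 ≤ n) (s : ℝ) (hs : 0 < s) (α : ℝ) (hα0 : 0 < α) (hα1 : α < 1)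
    (t : ℝ) (ht : 0 < t) (htα : tCdf (n - 1) t - tCdf (n - 1) (-t) = 1 - α)
    (q r : ℝ) (hqr : q ≤ r) :
    (r - q) / s -
        ((1 / tPdf (n - 1) t) / Real.sqrt n) *
          (tCdf (n - 1) (Real.sqrt n * r / s) - tCdf (n - 1) (Real.sqrt n * q / s)) ≥
      2 * t / Real.sqrt n -
        ((1 / tPdf (n - 1) t) / Real.sqrt n) * (tCdf (n - 1) t - tCdf (n - 1) (-t)) :=
  stmt10_general n hn s hs t ht q r hqr
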